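/- arXiv:2010.13675 — 3 statements merged into one kernel-verified Lean document; each statement's English description precedes it below -/
import Mathlib

section
/- Let QA = {q ++ [a] : q ∈ Q, a ∈ A} and AT = {[a] ++ t : a ∈ A, t ∈ T}; suppose C carries a factorization system (E, M) and has the coproducts ∐_Q X, ∐_{Q∪QA} X and the products ∏_{T∪AT} Y, ∏_T Y. Let c₁ : ∐_Q X → ∏_{T∪AT} Y and c₂ : ∐_{Q∪QA} X → ∏_T Y be the morphisms determined by π_w ∘ c₁ ∘ ι_q = ℓ(q ++ w) and π_t ∘ c₂ ∘ ι_w = ℓ(w ++ t), and fix (E,M)-factorizations c₁ = m₁ ∘ e₁ through N₁ and c₂ = m₂ ∘ e₂ through N₂. Then there exist unique morphisms δ^min_a : N₁ → N₂ (a ∈ A) and ē^min : N₁ → N₂ such that, setting i^min_q = e₁ ∘ ι_q and o^min_t = π_t ∘ m₂, the tuple (N₁, N₂, i^min, δ^min, ē^min, o^min) is a coherent (Q,T)-biautomaton consistent with ℓ, (e₁, e₂) is a morphism of (Q,T)-biautomata from the initial biautomaton Init_{Q,T}(ℓ) to it, and (m₁, m₂) is a morphism of (Q,T)-biautomata from it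 to the final biautomaton Final_{Q,T}(ℓ). Moreover this biautomaton is minimal: for every coherent (Q,T)-biautomaton B consistent with ℓ there exist a coherent (Q,T)-biautomaton P consistent with ℓ and morphisms of (Q,T)-biautomata from P to (N₁, N₂, i^min, δ^min, ē^min, o^min) with both components in E, and from P to B with both components in M. -/
open CategoryTheory

/-- A factorization system `(E, M)` on a category `C`. -/
structure FactSys {C : Type*} [Category C] (E M : MorphismProperty C) : Prop where
  E_iso : ∀ {X Y : C} (f : X ⟶ Y), IsIso f → E f
  M_iso : ∀ {X Y : C} (f : X ⟶ Y), IsIso f → M f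
  E_comp : ∀ {X Y Z : C} (f : X ⟶ Y) (g : Y ⟶ Z), E f → E g → E (f ≫ g)
  M_comp : ∀ {X Y Z : C} (f : X ⟶ Y) (g : Y ⟶ Z), M f → M g → M (f ≫ g)
  fact : ∀ {X Y : C} (f : X ⟶ Y), ∃ (Z : C) (e : X ⟶ Z) (m : Z ⟶ Y), E e ∧ M m ∧ e ≫ m = f
  diag : ∀ {X Y Z W : C} (e : X ⟶ Y) (m : Z ⟶ W) (u : X ⟶ Z) (v : Y ⟶ W),
    E e → M m → e ≫ v = u ≫ m → ∃! d : Y ⟶ Z, e ≫ d = u ∧ d ≫ m = v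

/-- A `(Q,T)`-biautomaton in a category `C` with input object `X` and output object `Y`. -/
structure Biauto (A : Type) {C : Type*} [Category C] (X Y : C)
    (Q T : Set (List A)) where
  B1 : C
  B2 : C
  i : (q : List A) → q ∈ Q → (X ⟶ B1)
  δ : A → (B1 ⟶ B2)
  eb : B1 ⟶ B2
  o : (t : List A) → t ∈ T → (B2 ⟶ Y)

namespace Biauto

variable {A : Type} {C : Type*} [Category C] {X Y : C} {Q T : Set (List A)}

/-- The coherence conditions of a `(Q,T)`-biautomaton. -/
def Coherent (B : Biauto A X Y Q T) : Prop :=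
  (∀ (q : List A) (hq : q ∈ Q) (a : A) (h : q ++ [a] ∈ Q),
    B.i q hq ≫ B.δ a = B.i (q ++ [a]) h ≫ B.eb) ∧
  (∀ (t : List A) (ht : t ∈ T) (a : A) (h : [a] ++ t ∈ T),
    B.δ a ≫ B.o t ht = B.eb ≫ B.o ([a] ++ t) h)

/-- Consistency of a `(Q,T)`-biautomaton with the language `ℓ`. -/
def Consistent (B : Biauto A X Y Q T) (ℓ : List A → (X ⟶ Y)) : Prop :=
  (∀ (q : List A) (hq : q ∈ Q) (a : A) (t : List A) (ht : t ∈ T),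
    B.i q hq ≫ B.δ a ≫ B.o t ht = ℓ (q ++ [a] ++ t)) ∧
  (∀ (q : List A) (hq : q ∈ Q) (t : List A) (ht : t ∈ T),
    B.i q hq ≫ B.eb ≫ B.o t ht = ℓ (q ++ t))

/-- `(f1, f2)` is a morphism of `(Q,T)`-biautomata from `B` to `B'`. -/
def IsHom (B B' : Biauto A X Y Q T) (f1 : B.B1 ⟶ B'.B1) (f2 : B.B2 ⟶ B'.B2) : Prop :=
  (∀ (q : List A) (hq : q ∈ Q), B.i q hq ≫ f1 = B'.i q hq) ∧
  (∀ a : A, B.δ a ≫ f2 = f1 ≫ B'.δ a) ∧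
  (B.eb ≫ f2 = f1 ≫ B'.eb) ∧
  (∀ (t : List A) (ht : t ∈ T), f2 ≫ B'.o t ht = B.o t ht)

end Biauto

/-!
Diagonals of the factorization system are unique, so they are compatible with every piece of
biautomaton structure: factoring both components of a morphism of biautomata puts a unique
biautomaton structure on the middle objects, and a commutative square of morphisms of biautomata
with `E`-components on one side and `M`-components on the other has a diagonal that is again a
morphism of biautomata. The first fact, applied to the canonical morphism `(c₁, c₂)` from `Init`
to `Final`, gives the minimal biautomaton. For minimality, a coherent consistent `B` sits between
`Init` and `Final`; factoring `Init → B` yields `P`, and since morphisms out of `Init` are unique,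
`Init → P → B → Final` and `Init → Bmin → Final` agree, so the second fact gives `P → Bmin`.
Along morphisms the input half of coherence and consistency travel forwards, the output half of
coherence backwards.
-/

section Universal

variable {C : Type*} [Category C] {J : Type*} {p : J → Prop}

def IsCopower {X P : C} (ι : (j : J) → p j → (X ⟶ P)) : Prop :=
  ∀ (Z : C) (f : (j : J) → p j → (X ⟶ Z)), ∃! g : P ⟶ Z, ∀ j hj, ι j hj ≫ g = f j hj

def IsPower {Y R : C} (π : (j : J) → p j → (R ⟶ Y)) : Prop :=
  ∀ (Z : C) (f : (j : J) → p j → (Z ⟶ Y)), ∃! g : Z ⟶ R, ∀ j hj, g ≫ π j hj = f j hj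

lemma IsCopower.hom_ext {X P Z : C} {ι : (j : J) → p j → (X ⟶ P)} (h : IsCopower ι)
    {f g : P ⟶ Z} (hfg : ∀ j hj, ι j hj ≫ f = ι j hj ≫ g) : f = g :=
  (h Z fun j hj => ι j hj ≫ g).unique hfg fun _ _ => rfl

lemma IsPower.hom_ext {Y R Z : C} {π : (j : J) → p j → (R ⟶ Y)} (h : IsPower π)
    {f g : Z ⟶ R} (hfg : ∀ j hj, f ≫ π j hj = g ≫ π j hj) : f = g :=
  (h Z fun j hj => g ≫ π j hj).unique hfg fun _ _ => rfl

end Universal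

namespace FactSys

variable {C : Type*} [Category C] {E M : MorphismProperty C}

lemma hom_ext (fs : FactSys E M) {X Y Z W : C} {e : X ⟶ Y} {m : Z ⟶ W} (he : E e) (hm : M m)
    {d d' : Y ⟶ Z} (h₁ : e ≫ d = e ≫ d') (h₂ : d ≫ m = d' ≫ m) : d = d' :=
  (fs.diag e m (e ≫ d') (d' ≫ m) he hm (Category.assoc _ _ _).symm).unique ⟨h₁, h₂⟩ ⟨rfl, rfl⟩

lemma E_of_comp (fs : FactSys E M) {X Y Z : C} {f : X ⟶ Y} {g : Y ⟶ Z} (hf : E f)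
    (hfg : E (f ≫ g)) : E g := by
  obtain ⟨W, e, m, he, hm, rfl⟩ := fs.fact g
  obtain ⟨r, ⟨hr, hmr⟩, -⟩ := fs.diag (f ≫ e ≫ m) m (f ≫ e) (𝟙 _) hfg hm (by simp)
  have hrm : m ≫ r = 𝟙 W :=
    fs.hom_ext (fs.E_comp _ _ hf he) hm (by simpa using hr) (by simp [hmr])
  exact fs.E_comp _ _ he (fs.E_iso m ⟨r, hrm, hmr⟩)

end FactSys

namespace Biauto

variable {A : Type} {C : Type*} [Category C] {X Y : C} {Q T : Set (List A)}

def InputCoherent (B : Biauto A X Y Q T) : Prop :=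
  ∀ (q : List A) (hq : q ∈ Q) (a : A) (h : q ++ [a] ∈ Q),
    B.i q hq ≫ B.δ a = B.i (q ++ [a]) h ≫ B.eb

def OutputCoherent (B : Biauto A X Y Q T) : Prop :=
  ∀ (t : List A) (ht : t ∈ T) (a : A) (h : [a] ++ t ∈ T),
    B.δ a ≫ B.o t ht = B.eb ≫ B.o ([a] ++ t) h

lemma InputCoherent.exists_extension {B : Biauto A X Y Q T} (hB : B.InputCoherent) {w : List A}
    (hw : w ∈ Q ∪ {w | ∃ q ∈ Q, ∃ a : A, w = q ++ [a]}) :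
    ∃ g : X ⟶ B.B2, (∀ hwQ : w ∈ Q, g = B.i w hwQ ≫ B.eb) ∧
      ∀ q (hq : q ∈ Q) (a : A), w = q ++ [a] → g = B.i q hq ≫ B.δ a := by
  rcases hw with hwQ | ⟨q, hq, a, rfl⟩
  · refine ⟨B.i w hwQ ≫ B.eb, fun _ => rfl, ?_⟩
    rintro q hq a rfl
    exact (hB q hq a hwQ).symm
  · refine ⟨B.i q hq ≫ B.δ a, hB q hq a, ?_⟩
    intro q' hq' a' hw
    obtain ⟨rfl, rfl⟩ := List.append_singleton_inj.mp hw
    rfl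

lemma OutputCoherent.exists_extension {B : Biauto A X Y Q T} (hB : B.OutputCoherent)
    {w : List A} (hw : w ∈ T ∪ {w | ∃ a : A, ∃ t ∈ T, w = [a] ++ t}) :
    ∃ g : B.B1 ⟶ Y, (∀ hwT : w ∈ T, g = B.eb ≫ B.o w hwT) ∧
      ∀ (a : A) t (ht : t ∈ T), w = [a] ++ t → g = B.δ a ≫ B.o t ht := by
  rcases hw with hwT | ⟨a, t, ht, rfl⟩
  · refine ⟨B.eb ≫ B.o w hwT, fun _ => rfl, ?_⟩
    rintro a t ht rfl
    exact (hB t ht a hwT).symm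
  · refine ⟨B.δ a ≫ B.o t ht, hB t ht a, ?_⟩
    intro a' t' ht' hw
    obtain ⟨rfl, rfl⟩ := List.cons.inj hw
    rfl

namespace IsHom

variable {B B' B'' : Biauto A X Y Q T} {f1 : B.B1 ⟶ B'.B1} {f2 : B.B2 ⟶ B'.B2}

lemma i_comp (hf : IsHom B B' f1 f2) (q : List A) (hq : q ∈ Q) : B.i q hq ≫ f1 = B'.i q hq :=
  hf.1 q hq

lemma δ_comp (hf : IsHom B B' f1 f2) (a : A) : B.δ a ≫ f2 = f1 ≫ B'.δ a :=
  hf.2.1 a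

lemma eb_comp (hf : IsHom B B' f1 f2) : B.eb ≫ f2 = f1 ≫ B'.eb :=
  hf.2.2.1

lemma comp_o (hf : IsHom B B' f1 f2) (t : List A) (ht : t ∈ T) : f2 ≫ B'.o t ht = B.o t ht :=
  hf.2.2.2 t ht

lemma comp {g1 : B'.B1 ⟶ B''.B1} {g2 : B'.B2 ⟶ B''.B2} (hf : IsHom B B' f1 f2)
    (hg : IsHom B' B'' g1 g2) : IsHom B B'' (f1 ≫ g1) (f2 ≫ g2) :=
  ⟨fun q hq => by rw [reassoc_of% hf.i_comp, hg.i_comp],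
    fun a => by rw [reassoc_of% hf.δ_comp, hg.δ_comp, Category.assoc],
    by rw [reassoc_of% hf.eb_comp, hg.eb_comp, Category.assoc],
    fun t ht => by rw [Category.assoc, hg.comp_o, hf.comp_o]⟩

lemma inputCoherent (hf : IsHom B B' f1 f2) (hB : B.InputCoherent) : B'.InputCoherent := by
  intro q hq a h
  rw [← hf.i_comp, ← hf.i_comp _ h, Category.assoc, Category.assoc, ← hf.δ_comp, ← hf.eb_comp,
    reassoc_of% hB q hq a h]

lemma outputCoherent (hf : IsHom B B' f1 f2) (hB' : B'.OutputCoherent) : B.OutputCoherent := by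
  intro t ht a h
  rw [← hf.comp_o t ht, ← hf.comp_o _ h, reassoc_of% hf.δ_comp, reassoc_of% hf.eb_comp,
    hB' t ht a h]

lemma consistent {ℓ : List A → (X ⟶ Y)} (hf : IsHom B B' f1 f2) (hB : B.Consistent ℓ) :
    B'.Consistent ℓ := by
  constructor
  · intro q hq a t ht
    rw [← hf.i_comp, Category.assoc, ← reassoc_of% hf.δ_comp, hf.comp_o, hB.1]
  · intro q hq t ht
    rw [← hf.i_comp, Category.assoc, ← reassoc_of% hf.eb_comp, hf.comp_o, hB.2]

end IsHom

section Factorization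

variable {E M : MorphismProperty C}

def between (B D : Biauto A X Y Q T) {N1 N2 : C} (e1 : B.B1 ⟶ N1) (m2 : N2 ⟶ D.B2)
    (δ : A → (N1 ⟶ N2)) (eb : N1 ⟶ N2) : Biauto A X Y Q T :=
  ⟨N1, N2, fun q hq => B.i q hq ≫ e1, δ, eb, fun t ht => m2 ≫ D.o t ht⟩

lemma IsHom.existsUnique_between (fs : FactSys E M) {B D : Biauto A X Y Q T}
    {h1 : B.B1 ⟶ D.B1} {h2 : B.B2 ⟶ D.B2} (hh : IsHom B D h1 h2) {N1 N2 : C}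
    {e1 : B.B1 ⟶ N1} {m1 : N1 ⟶ D.B1} {e2 : B.B2 ⟶ N2} {m2 : N2 ⟶ D.B2}
    (he1 : E e1) (hem1 : e1 ≫ m1 = h1) (hm2 : M m2) (hem2 : e2 ≫ m2 = h2) :
    ∃! p : (A → (N1 ⟶ N2)) × (N1 ⟶ N2),
      IsHom B (between B D e1 m2 p.1 p.2) e1 e2 ∧ IsHom (between B D e1 m2 p.1 p.2) D m1 m2 := by
  have diag : ∀ {s : B.B1 ⟶ B.B2} {r : D.B1 ⟶ D.B2}, s ≫ h2 = h1 ≫ r →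
      ∃! d : N1 ⟶ N2, e1 ≫ d = s ≫ e2 ∧ d ≫ m2 = m1 ≫ r := fun hsr =>
    fs.diag e1 m2 _ _ he1 hm2 (by rw [reassoc_of% hem1, Category.assoc, hem2, hsr])
  choose δ hδ using fun a => (diag (hh.δ_comp a)).exists
  obtain ⟨eb, heb, -⟩ := diag hh.eb_comp
  refine ⟨(δ, eb), ⟨⟨fun _ _ => rfl, fun a => (hδ a).1.symm, heb.1.symm, fun t ht => ?_⟩,
    ⟨fun q hq => ?_, fun a => (hδ a).2, heb.2, fun _ _ => rfl⟩⟩, ?_⟩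
  · show e2 ≫ m2 ≫ D.o t ht = B.o t ht
    rw [reassoc_of% hem2, hh.comp_o]
  · show (B.i q hq ≫ e1) ≫ m1 = D.i q hq
    rw [Category.assoc, hem1, hh.i_comp]
  · rintro ⟨δ', eb'⟩ ⟨hB, hD⟩
    refine Prod.ext (funext fun a => ?_) ?_
    · exact (diag (hh.δ_comp a)).unique ⟨(hB.δ_comp a).symm, hD.δ_comp a⟩ (hδ a)
    · exact (diag hh.eb_comp).unique ⟨hB.eb_comp.symm, hD.eb_comp⟩ heb

lemma IsHom.lift (fs : FactSys E M) {B B' D' D : Biauto A X Y Q T}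
    {e1 : B.B1 ⟶ B'.B1} {e2 : B.B2 ⟶ B'.B2} {m1 : D'.B1 ⟶ D.B1} {m2 : D'.B2 ⟶ D.B2}
    {u1 : B.B1 ⟶ D'.B1} {u2 : B.B2 ⟶ D'.B2} {v1 : B'.B1 ⟶ D.B1} {v2 : B'.B2 ⟶ D.B2}
    (he : IsHom B B' e1 e2) (he1 : E e1) (he2 : E e2)
    (hm : IsHom D' D m1 m2) (hm1 : M m1) (hm2 : M m2)
    (hu : IsHom B D' u1 u2) (hv : IsHom B' D v1 v2)
    (h1 : e1 ≫ v1 = u1 ≫ m1) (h2 : e2 ≫ v2 = u2 ≫ m2) :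
    ∃ (d1 : B'.B1 ⟶ D'.B1) (d2 : B'.B2 ⟶ D'.B2), IsHom B' D' d1 d2 ∧
      e1 ≫ d1 = u1 ∧ d1 ≫ m1 = v1 ∧ e2 ≫ d2 = u2 ∧ d2 ≫ m2 = v2 := by
  obtain ⟨d1, ⟨hd1, hd1'⟩, -⟩ := fs.diag e1 m1 u1 v1 he1 hm1 h1
  obtain ⟨d2, ⟨hd2, hd2'⟩, -⟩ := fs.diag e2 m2 u2 v2 he2 hm2 h2
  have transition : ∀ {s : B.B1 ⟶ B.B2} {s' : B'.B1 ⟶ B'.B2} {r' : D'.B1 ⟶ D'.B2}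
      {r : D.B1 ⟶ D.B2}, s ≫ e2 = e1 ≫ s' → s ≫ u2 = u1 ≫ r' → r' ≫ m2 = m1 ≫ r →
      s' ≫ v2 = v1 ≫ r → s' ≫ d2 = d1 ≫ r' := fun hs hsu hr hsv =>
    fs.hom_ext he1 hm2 (by rw [← reassoc_of% hs, hd2, reassoc_of% hd1, hsu])
      (by rw [Category.assoc, hd2', Category.assoc, hr, reassoc_of% hd1', hsv])
  refine ⟨d1, d2, ⟨fun q hq => ?_, fun a => ?_, ?_, fun t ht => ?_⟩, hd1, hd1', hd2, hd2'⟩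
  · rw [← he.i_comp, Category.assoc, hd1, hu.i_comp]
  · exact transition (he.δ_comp a) (hu.δ_comp a) (hm.δ_comp a) (hv.δ_comp a)
  · exact transition he.eb_comp hu.eb_comp hm.eb_comp hv.eb_comp
  · rw [← hm.comp_o, reassoc_of% hd2', hv.comp_o]

end Factorization

/-- `I` is `Init_{Q,T}(ℓ)`: `I.B1 = ∐_Q X` with coprojections `I.i`, and `I.B2 = ∐_{Q ∪ QA} X`
with coprojections `ι2`. -/
structure IsInit (ℓ : List A → (X ⟶ Y)) (I : Biauto A X Y Q T)
    (ι2 : (w : List A) → w ∈ Q ∪ {w | ∃ q ∈ Q, ∃ a : A, w = q ++ [a]} → (X ⟶ I.B2)) : Prop where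
  isCopower_i : IsCopower I.i
  isCopower_ι2 : IsCopower ι2
  i_eb : ∀ (q : List A) (hq : q ∈ Q), I.i q hq ≫ I.eb = ι2 q (Set.mem_union_left _ hq)
  i_δ : ∀ (a : A) (q : List A) (hq : q ∈ Q),
    I.i q hq ≫ I.δ a = ι2 (q ++ [a]) (Set.mem_union_right _ ⟨q, hq, a, rfl⟩)
  ι2_o : ∀ (t : List A) (ht : t ∈ T) (w : List A) hw, ι2 w hw ≫ I.o t ht = ℓ (w ++ t)

/-- `F` is `Final_{Q,T}(ℓ)`: `F.B2 = ∏_T Y` with projections `F.o`, and `F.B1 = ∏_{T ∪ AT} Y`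
with projections `π1`. -/
structure IsFinal (ℓ : List A → (X ⟶ Y)) (F : Biauto A X Y Q T)
    (π1 : (w : List A) → w ∈ T ∪ {w | ∃ a : A, ∃ t ∈ T, w = [a] ++ t} → (F.B1 ⟶ Y)) : Prop where
  isPower_o : IsPower F.o
  isPower_π1 : IsPower π1
  eb_o : ∀ (t : List A) (ht : t ∈ T), F.eb ≫ F.o t ht = π1 t (Set.mem_union_left _ ht)
  δ_o : ∀ (a : A) (t : List A) (ht : t ∈ T),
    F.δ a ≫ F.o t ht = π1 ([a] ++ t) (Set.mem_union_right _ ⟨a, t, ht, rfl⟩)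
  i_π1 : ∀ (q : List A) (hq : q ∈ Q) (w : List A) hw, F.i q hq ≫ π1 w hw = ℓ (q ++ w)

section Init

variable {ℓ : List A → (X ⟶ Y)} {I : Biauto A X Y Q T}
  {ι2 : (w : List A) → w ∈ Q ∪ {w | ∃ q ∈ Q, ∃ a : A, w = q ++ [a]} → (X ⟶ I.B2)}

lemma IsInit.inputCoherent (hI : I.IsInit ℓ ι2) : I.InputCoherent := by
  intro q hq a h
  rw [hI.i_δ, hI.i_eb]

lemma IsInit.consistent (hI : I.IsInit ℓ ι2) : I.Consistent ℓ :=
  ⟨fun q hq a t ht => by rw [reassoc_of% hI.i_δ, hI.ι2_o],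
    fun q hq t ht => by rw [reassoc_of% hI.i_eb, hI.ι2_o]⟩

lemma IsInit.hom_ext (hI : I.IsInit ℓ ι2) {B : Biauto A X Y Q T} {f1 g1 : I.B1 ⟶ B.B1}
    {f2 g2 : I.B2 ⟶ B.B2} (hf : IsHom I B f1 f2) (hg : IsHom I B g1 g2) : f1 = g1 ∧ f2 = g2 := by
  obtain rfl : f1 = g1 := hI.isCopower_i.hom_ext fun q hq => by rw [hf.i_comp, hg.i_comp]
  refine ⟨rfl, hI.isCopower_ι2.hom_ext fun w hw => ?_⟩
  rcases id hw with hwQ | ⟨q, hq, a, rfl⟩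
  · rw [← hI.i_eb w hwQ, Category.assoc, Category.assoc, hf.eb_comp, hg.eb_comp]
  · rw [← hI.i_δ a q hq, Category.assoc, Category.assoc, hf.δ_comp, hg.δ_comp]

lemma IsInit.exists_isHom (hI : I.IsInit ℓ ι2) {B : Biauto A X Y Q T} (hB : B.InputCoherent)
    (hBℓ : B.Consistent ℓ) : ∃ (h1 : I.B1 ⟶ B.B1) (h2 : I.B2 ⟶ B.B2), IsHom I B h1 h2 := by
  choose g hgQ hgA using fun w hw => hB.exists_extension (w := w) hw
  obtain ⟨h1, hh1, -⟩ := hI.isCopower_i _ B.i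
  obtain ⟨h2, hh2, -⟩ := hI.isCopower_ι2 _ g
  refine ⟨h1, h2, hh1, fun a => hI.isCopower_i.hom_ext fun q hq => ?_,
    hI.isCopower_i.hom_ext fun q hq => ?_, fun t ht => hI.isCopower_ι2.hom_ext fun w hw => ?_⟩
  · rw [reassoc_of% hI.i_δ, hh2, reassoc_of% hh1, hgA _ _ q hq a rfl]
  · rw [reassoc_of% hI.i_eb, hh2, reassoc_of% hh1, hgQ _ _ hq]
  · rw [reassoc_of% hh2, hI.ι2_o]
    rcases id hw with hwQ | ⟨q, hq, a, rfl⟩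
    · rw [hgQ w hw hwQ, Category.assoc, hBℓ.2 w hwQ t ht]
    · rw [hgA _ hw q hq a rfl, Category.assoc, hBℓ.1 q hq a t ht]

lemma IsInit.isHom_final (hI : I.IsInit ℓ ι2) {F : Biauto A X Y Q T}
    {π1 : (w : List A) → w ∈ T ∪ {w | ∃ a : A, ∃ t ∈ T, w = [a] ++ t} → (F.B1 ⟶ Y)}
    (hF : F.IsFinal ℓ π1) {c₁ : I.B1 ⟶ F.B1} {c₂ : I.B2 ⟶ F.B2}
    (hc₁ : ∀ (q : List A) (hq : q ∈ Q) (w : List A) hw, I.i q hq ≫ c₁ ≫ π1 w hw = ℓ (q ++ w))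
    (hc₂ : ∀ (w : List A) hw (t : List A) (ht : t ∈ T), ι2 w hw ≫ c₂ ≫ F.o t ht = ℓ (w ++ t)) :
    IsHom I F c₁ c₂ := by
  refine ⟨fun q hq => hF.isPower_π1.hom_ext fun w hw => ?_,
    fun a => hI.isCopower_i.hom_ext fun q hq => hF.isPower_o.hom_ext fun t ht => ?_,
    hI.isCopower_i.hom_ext fun q hq => hF.isPower_o.hom_ext fun t ht => ?_,
    fun t ht => hI.isCopower_ι2.hom_ext fun w hw => ?_⟩
  · rw [Category.assoc, hc₁, hF.i_π1]
  · simp only [Category.assoc]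
    rw [reassoc_of% hI.i_δ, hc₂, hF.δ_o, hc₁, List.append_assoc]
  · simp only [Category.assoc]
    rw [reassoc_of% hI.i_eb, hc₂, hF.eb_o, hc₁]
  · rw [hc₂, hI.ι2_o]

end Init

section Final

variable {ℓ : List A → (X ⟶ Y)} {F : Biauto A X Y Q T}
  {π1 : (w : List A) → w ∈ T ∪ {w | ∃ a : A, ∃ t ∈ T, w = [a] ++ t} → (F.B1 ⟶ Y)}

lemma IsFinal.outputCoherent (hF : F.IsFinal ℓ π1) : F.OutputCoherent := by
  intro t ht a h
  rw [hF.δ_o, hF.eb_o]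

lemma IsFinal.exists_isHom (hF : F.IsFinal ℓ π1) {B : Biauto A X Y Q T} (hB : B.OutputCoherent)
    (hBℓ : B.Consistent ℓ) : ∃ (k1 : B.B1 ⟶ F.B1) (k2 : B.B2 ⟶ F.B2), IsHom B F k1 k2 := by
  choose g hgT hgA using fun w hw => hB.exists_extension (w := w) hw
  obtain ⟨k1, hk1, -⟩ := hF.isPower_π1 _ g
  obtain ⟨k2, hk2, -⟩ := hF.isPower_o _ B.o
  refine ⟨k1, k2, fun q hq => hF.isPower_π1.hom_ext fun w hw => ?_,
    fun a => hF.isPower_o.hom_ext fun t ht => ?_, hF.isPower_o.hom_ext fun t ht => ?_, hk2⟩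
  · rw [Category.assoc, hk1, hF.i_π1]
    rcases id hw with hwT | ⟨a, t, ht, rfl⟩
    · rw [hgT w hw hwT, hBℓ.2 q hq w hwT]
    · rw [hgA _ hw a t ht rfl, hBℓ.1 q hq a t ht, List.append_assoc]
  · rw [Category.assoc, hk2, Category.assoc, hF.δ_o, hk1, hgA _ _ a t ht rfl]
  · rw [Category.assoc, hk2, Category.assoc, hF.eb_o, hk1, hgT _ _ ht]

end Final

lemma IsInit.exists_factorization {E M : MorphismProperty C} (fs : FactSys E M)
    {ℓ : List A → (X ⟶ Y)} {I : Biauto A X Y Q T}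
    {ι2 : (w : List A) → w ∈ Q ∪ {w | ∃ q ∈ Q, ∃ a : A, w = q ++ [a]} → (X ⟶ I.B2)}
    (hI : I.IsInit ℓ ι2) {N F B : Biauto A X Y Q T}
    {e1 : I.B1 ⟶ N.B1} {e2 : I.B2 ⟶ N.B2} {m1 : N.B1 ⟶ F.B1} {m2 : N.B2 ⟶ F.B2}
    {h1 : I.B1 ⟶ B.B1} {h2 : I.B2 ⟶ B.B2} {k1 : B.B1 ⟶ F.B1} {k2 : B.B2 ⟶ F.B2}
    (he : IsHom I N e1 e2) (he1 : E e1) (he2 : E e2)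
    (hm : IsHom N F m1 m2) (hm1 : M m1) (hm2 : M m2)
    (hh : IsHom I B h1 h2) (hk : IsHom B F k1 k2) :
    ∃ (P : Biauto A X Y Q T) (e1' : I.B1 ⟶ P.B1) (e2' : I.B2 ⟶ P.B2)
      (f1 : P.B1 ⟶ N.B1) (f2 : P.B2 ⟶ N.B2) (g1 : P.B1 ⟶ B.B1) (g2 : P.B2 ⟶ B.B2),
      IsHom I P e1' e2' ∧ IsHom P N f1 f2 ∧ E f1 ∧ E f2 ∧ IsHom P B g1 g2 ∧ M g1 ∧ M g2 := by
  obtain ⟨P1, e1', g1, he1', hg1, hh1⟩ := fs.fact h1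
  obtain ⟨P2, e2', g2, he2', hg2, hh2⟩ := fs.fact h2
  obtain ⟨⟨δ, eb⟩, ⟨he', hg⟩, -⟩ := hh.existsUnique_between fs he1' hh1 hg2 hh2
  obtain ⟨hc1, hc2⟩ := hI.hom_ext (he'.comp (hg.comp hk)) (he.comp hm)
  obtain ⟨f1, f2, hf, hf1, -, hf2, -⟩ :=
    he'.lift fs he1' he2' hm hm1 hm2 he (hg.comp hk) hc1 hc2
  exact ⟨_, e1', e2', f1, f2, g1, g2, he', hf, fs.E_of_comp he1' (hf1 ▸ he1),
    fs.E_of_comp he2' (hf2 ▸ he2), hg, hg1, hg2⟩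

end Biauto

theorem stmt11_general {A : Type} {C : Type*} [Category C]
    (E M : MorphismProperty C) (fs : FactSys E M) {X Y : C}
    (ℓ : List A → (X ⟶ Y)) (Q T : Set (List A))
    -- the copower over Q
    (P1 : C) (ι1 : (q : List A) → q ∈ Q → (X ⟶ P1))
    (hP1 : ∀ (Z : C) (f : (q : List A) → q ∈ Q → (X ⟶ Z)),
      ∃! g : P1 ⟶ Z, ∀ (q : List A) (hq : q ∈ Q), ι1 q hq ≫ g = f q hq)
    -- the copower over Q ∪ QA
    (P2 : C)
    (ι2 : (w : List A) → w ∈ Q ∪ {w | ∃ q ∈ Q, ∃ a : A, w = q ++ [a]} → (X ⟶ P2))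
    (hP2 : ∀ (Z : C)
        (f : (w : List A) → w ∈ Q ∪ {w | ∃ q ∈ Q, ∃ a : A, w = q ++ [a]} → (X ⟶ Z)),
      ∃! g : P2 ⟶ Z, ∀ w hw, ι2 w hw ≫ g = f w hw)
    -- the power over T ∪ AT
    (R1 : C)
    (π1 : (w : List A) → w ∈ T ∪ {w | ∃ a : A, ∃ t ∈ T, w = [a] ++ t} → (R1 ⟶ Y))
    (hR1 : ∀ (Z : C)
        (f : (w : List A) → w ∈ T ∪ {w | ∃ a : A, ∃ t ∈ T, w = [a] ++ t} → (Z ⟶ Y)),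
      ∃! g : Z ⟶ R1, ∀ w hw, g ≫ π1 w hw = f w hw)
    -- the power over T
    (R2 : C) (π2 : (t : List A) → t ∈ T → (R2 ⟶ Y))
    (hR2 : ∀ (Z : C) (f : (t : List A) → t ∈ T → (Z ⟶ Y)),
      ∃! g : Z ⟶ R2, ∀ (t : List A) (ht : t ∈ T), g ≫ π2 t ht = f t ht)
    -- the initial biautomaton
    (ebI : P1 ⟶ P2)
    (hebI : ∀ (q : List A) (hq : q ∈ Q),
      ι1 q hq ≫ ebI = ι2 q (Set.mem_union_left _ hq))
    (δI : A → (P1 ⟶ P2))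
    (hδI : ∀ (a : A) (q : List A) (hq : q ∈ Q),
      ι1 q hq ≫ δI a = ι2 (q ++ [a]) (Set.mem_union_right _ ⟨q, hq, a, rfl⟩))
    (oI : (t : List A) → t ∈ T → (P2 ⟶ Y))
    (hoI : ∀ (t : List A) (ht : t ∈ T) (w : List A) hw,
      ι2 w hw ≫ oI t ht = ℓ (w ++ t))
    -- the final biautomaton
    (iF : (q : List A) → q ∈ Q → (X ⟶ R1))
    (hiF : ∀ (q : List A) (hq : q ∈ Q) (w : List A) hw,
      iF q hq ≫ π1 w hw = ℓ (q ++ w))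
    (ebF : R1 ⟶ R2)
    (hebF : ∀ (t : List A) (ht : t ∈ T),
      ebF ≫ π2 t ht = π1 t (Set.mem_union_left _ ht))
    (δF : A → (R1 ⟶ R2))
    (hδF : ∀ (a : A) (t : List A) (ht : t ∈ T),
      δF a ≫ π2 t ht = π1 ([a] ++ t) (Set.mem_union_right _ ⟨a, t, ht, rfl⟩))
    -- the canonical morphisms and their chosen (E,M)-factorizations
    (c₁ : P1 ⟶ R1)
    (hc₁ : ∀ (q : List A) (hq : q ∈ Q) (w : List A) hw,
      ι1 q hq ≫ c₁ ≫ π1 w hw = ℓ (q ++ w))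
    (c₂ : P2 ⟶ R2)
    (hc₂ : ∀ (w : List A) hw (t : List A) (ht : t ∈ T),
      ι2 w hw ≫ c₂ ≫ π2 t ht = ℓ (w ++ t))
    (N1 : C) (e1 : P1 ⟶ N1) (m1 : N1 ⟶ R1)
    (he1 : E e1) (hm1 : M m1) (hem1 : e1 ≫ m1 = c₁)
    (N2 : C) (e2 : P2 ⟶ N2) (m2 : N2 ⟶ R2)
    (he2 : E e2) (hm2 : M m2) (hem2 : e2 ≫ m2 = c₂) :
    let Init : Biauto A X Y Q T := Biauto.mk P1 P2 ι1 δI ebI oI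
    let Final : Biauto A X Y Q T := Biauto.mk R1 R2 iF δF ebF π2
    let Bmin : (A → (N1 ⟶ N2)) → (N1 ⟶ N2) → Biauto A X Y Q T := fun δm ebm =>
      Biauto.mk N1 N2 (fun q hq => ι1 q hq ≫ e1) δm ebm (fun t ht => m2 ≫ π2 t ht)
    let Cond : (A → (N1 ⟶ N2)) → (N1 ⟶ N2) → Prop := fun δm ebm =>
      (Bmin δm ebm).Coherent ∧ (Bmin δm ebm).Consistent ℓ ∧
      Init.IsHom (Bmin δm ebm) e1 e2 ∧ (Bmin δm ebm).IsHom Final m1 m2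
    (∃! p : (A → (N1 ⟶ N2)) × (N1 ⟶ N2), Cond p.1 p.2) ∧
    (∀ (δm : A → (N1 ⟶ N2)) (ebm : N1 ⟶ N2), Cond δm ebm →
      ∀ B : Biauto A X Y Q T, B.Coherent → B.Consistent ℓ →
        ∃ Pb : Biauto A X Y Q T, Pb.Coherent ∧ Pb.Consistent ℓ ∧
          ∃ (f1 : Pb.B1 ⟶ N1) (f2 : Pb.B2 ⟶ N2)
            (g1 : Pb.B1 ⟶ B.B1) (g2 : Pb.B2 ⟶ B.B2),
            Pb.IsHom (Bmin δm ebm) f1 f2 ∧ E f1 ∧ E f2 ∧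
            Pb.IsHom B g1 g2 ∧ M g1 ∧ M g2) := by

  intro Init Final Bmin Cond
  have hI : Init.IsInit ℓ ι2 := ⟨hP1, hP2, hebI, hδI, hoI⟩
  have hF : Final.IsFinal ℓ π1 := ⟨hR2, hR1, hebF, hδF, hiF⟩
  have hCond : ∀ δm ebm, Cond δm ebm ↔
      Init.IsHom (Bmin δm ebm) e1 e2 ∧ (Bmin δm ebm).IsHom Final m1 m2 := fun δm ebm =>
    ⟨fun h => h.2.2, fun ⟨he, hm⟩ => ⟨⟨he.inputCoherent hI.inputCoherent,
      hm.outputCoherent hF.outputCoherent⟩, he.consistent hI.consistent, he, hm⟩⟩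
  refine ⟨(existsUnique_congr fun p : (A → (N1 ⟶ N2)) × (N1 ⟶ N2) => hCond p.1 p.2).mpr
    ((hI.isHom_final hF hc₁ hc₂).existsUnique_between fs he1 hem1 hm2 hem2), ?_⟩
  intro δm ebm hC B hB hBℓ
  obtain ⟨h1, h2, hh⟩ := hI.exists_isHom hB.1 hBℓ
  obtain ⟨k1, k2, hk⟩ := hF.exists_isHom hB.2 hBℓ
  obtain ⟨P, e1', e2', f1, f2, g1, g2, he', hf, hf1, hf2, hg, hg1, hg2⟩ :=
    hI.exists_factorization fs hC.2.2.1 he1 he2 hC.2.2.2 hm1 hm2 hh hk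
  exact ⟨P, ⟨he'.inputCoherent hI.inputCoherent, hg.outputCoherent hB.2⟩,
    he'.consistent hI.consistent, f1, f2, g1, g2, hf, hf1, hf2, hg, hg1, hg2⟩

/-- the (E,M)-factorizations of the two canonical morphisms carry a unique
structure of a coherent (Q,T)-biautomaton consistent with ℓ through which `(e₁,e₂)` and
`(m₁,m₂)` become morphisms of biautomata from the initial biautomaton and to the final
biautomaton respectively; moreover this biautomaton is minimal. -/
theorem stmt11 {A : Type} [Fintype A] {C : Type*} [Category C]
    (E M : MorphismProperty C) (fs : FactSys E M) {X Y : C}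
    (ℓ : List A → (X ⟶ Y)) (Q T : Set (List A))
    (hQpre : ∀ u v : List A, u ++ v ∈ Q → u ∈ Q)
    (hTsuf : ∀ u v : List A, u ++ v ∈ T → v ∈ T)
    (hεQ : [] ∈ Q) (hεT : [] ∈ T)
    -- the copower over Q
    (P1 : C) (ι1 : (q : List A) → q ∈ Q → (X ⟶ P1))
    (hP1 : ∀ (Z : C) (f : (q : List A) → q ∈ Q → (X ⟶ Z)),
      ∃! g : P1 ⟶ Z, ∀ (q : List A) (hq : q ∈ Q), ι1 q hq ≫ g = f q hq)
    -- the copower over Q ∪ QA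
    (P2 : C)
    (ι2 : (w : List A) → w ∈ Q ∪ {w | ∃ q ∈ Q, ∃ a : A, w = q ++ [a]} → (X ⟶ P2))
    (hP2 : ∀ (Z : C)
        (f : (w : List A) → w ∈ Q ∪ {w | ∃ q ∈ Q, ∃ a : A, w = q ++ [a]} → (X ⟶ Z)),
      ∃! g : P2 ⟶ Z, ∀ w hw, ι2 w hw ≫ g = f w hw)
    -- the power over T ∪ AT
    (R1 : C)
    (π1 : (w : List A) → w ∈ T ∪ {w | ∃ a : A, ∃ t ∈ T, w = [a] ++ t} → (R1 ⟶ Y))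
    (hR1 : ∀ (Z : C)
        (f : (w : List A) → w ∈ T ∪ {w | ∃ a : A, ∃ t ∈ T, w = [a] ++ t} → (Z ⟶ Y)),
      ∃! g : Z ⟶ R1, ∀ w hw, g ≫ π1 w hw = f w hw)
    -- the power over T
    (R2 : C) (π2 : (t : List A) → t ∈ T → (R2 ⟶ Y))
    (hR2 : ∀ (Z : C) (f : (t : List A) → t ∈ T → (Z ⟶ Y)),
      ∃! g : Z ⟶ R2, ∀ (t : List A) (ht : t ∈ T), g ≫ π2 t ht = f t ht)
    -- the initial biautomaton
    (ebI : P1 ⟶ P2)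
    (hebI : ∀ (q : List A) (hq : q ∈ Q),
      ι1 q hq ≫ ebI = ι2 q (Set.mem_union_left _ hq))
    (δI : A → (P1 ⟶ P2))
    (hδI : ∀ (a : A) (q : List A) (hq : q ∈ Q),
      ι1 q hq ≫ δI a = ι2 (q ++ [a]) (Set.mem_union_right _ ⟨q, hq, a, rfl⟩))
    (oI : (t : List A) → t ∈ T → (P2 ⟶ Y))
    (hoI : ∀ (t : List A) (ht : t ∈ T) (w : List A) hw,
      ι2 w hw ≫ oI t ht = ℓ (w ++ t))
    -- the final biautomaton
    (iF : (q : List A) → q ∈ Q → (X ⟶ R1))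
    (hiF : ∀ (q : List A) (hq : q ∈ Q) (w : List A) hw,
      iF q hq ≫ π1 w hw = ℓ (q ++ w))
    (ebF : R1 ⟶ R2)
    (hebF : ∀ (t : List A) (ht : t ∈ T),
      ebF ≫ π2 t ht = π1 t (Set.mem_union_left _ ht))
    (δF : A → (R1 ⟶ R2))
    (hδF : ∀ (a : A) (t : List A) (ht : t ∈ T),
      δF a ≫ π2 t ht = π1 ([a] ++ t) (Set.mem_union_right _ ⟨a, t, ht, rfl⟩))
    -- the canonical morphisms and their chosen (E,M)-factorizations
    (c₁ : P1 ⟶ R1)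
    (hc₁ : ∀ (q : List A) (hq : q ∈ Q) (w : List A) hw,
      ι1 q hq ≫ c₁ ≫ π1 w hw = ℓ (q ++ w))
    (c₂ : P2 ⟶ R2)
    (hc₂ : ∀ (w : List A) hw (t : List A) (ht : t ∈ T),
      ι2 w hw ≫ c₂ ≫ π2 t ht = ℓ (w ++ t))
    (N1 : C) (e1 : P1 ⟶ N1) (m1 : N1 ⟶ R1)
    (he1 : E e1) (hm1 : M m1) (hem1 : e1 ≫ m1 = c₁)
    (N2 : C) (e2 : P2 ⟶ N2) (m2 : N2 ⟶ R2)
    (he2 : E e2) (hm2 : M m2) (hem2 : e2 ≫ m2 = c₂) :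
    let Init : Biauto A X Y Q T := Biauto.mk P1 P2 ι1 δI ebI oI
    let Final : Biauto A X Y Q T := Biauto.mk R1 R2 iF δF ebF π2
    let Bmin : (A → (N1 ⟶ N2)) → (N1 ⟶ N2) → Biauto A X Y Q T := fun δm ebm =>
      Biauto.mk N1 N2 (fun q hq => ι1 q hq ≫ e1) δm ebm (fun t ht => m2 ≫ π2 t ht)
    let Cond : (A → (N1 ⟶ N2)) → (N1 ⟶ N2) → Prop := fun δm ebm =>
      (Bmin δm ebm).Coherent ∧ (Bmin δm ebm).Consistent ℓ ∧
      Init.IsHom (Bmin δm ebm) e1 e2 ∧ (Bmin δm ebm).IsHom Final m1 m2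
    (∃! p : (A → (N1 ⟶ N2)) × (N1 ⟶ N2), Cond p.1 p.2) ∧
    (∀ (δm : A → (N1 ⟶ N2)) (ebm : N1 ⟶ N2), Cond δm ebm →
      ∀ B : Biauto A X Y Q T, B.Coherent → B.Consistent ℓ →
        ∃ Pb : Biauto A X Y Q T, Pb.Coherent ∧ Pb.Consistent ℓ ∧
          ∃ (f1 : Pb.B1 ⟶ N1) (f2 : Pb.B2 ⟶ N2)
            (g1 : Pb.B1 ⟶ B.B1) (g2 : Pb.B2 ⟶ B.B2),
            Pb.IsHom (Bmin δm ebm) f1 f2 ∧ E f1 ∧ E f2 ∧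
            Pb.IsHom B g1 g2 ∧ M g1 ∧ M g2) :=
  stmt11_general E M fs ℓ Q T P1 ι1 hP1 P2 ι2 hP2 R1 π1 hR1 R2 π2 hR2 ebI hebI δI hδI oI hoI iF hiF
    ebF hebF δF hδF c₁ hc₁ c₂ hc₂ N1 e1 m1 he1 hm1 hem1 N2 e2 m2 he2 hm2 hem2
end

section
/- Let B = (B1, B2, (i_q)_{q∈Q}, (δ_a)_{a∈A}, ē, (o_t)_{t∈T}) be a coherent (Q,T)-biautomaton consistent with ℓ in which ē is an isomorphism. Define the hypothesis automaton H = (B1, i_ε, (ē⁻¹ ∘ δ_a)_{a∈A}, o_ε ∘ ē), where ε is the empty word. Then for all q ∈ Q and t ∈ T the value of H on the word q ++ t equals ℓ(q ++ t), and for all q ∈ Q, a ∈ A, t ∈ T the value of H on the word q ++ [a] ++ t equals ℓ(q ++ [a] ++ t). -/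
open CategoryTheory

/-- A word automaton in a category `C`, with input object `X` and output object `Y`. -/
structure Automaton (A : Type) {C : Type*} [Category C] (X Y : C) where
  S : C
  init : X ⟶ S
  δ : A → (S ⟶ S)
  out : S ⟶ Y

namespace Automaton

variable {A : Type} {C : Type*} [Category C] {X Y : C}

/-- The composite of the transitions along a word. -/
def runFrom (Au : Automaton A X Y) : List A → (Au.S ⟶ Au.S)
  | [] => 𝟙 Au.S
  | a :: w => Au.δ a ≫ Au.runFrom w

/-- The value of the automaton on a word: `o ∘ δ_{aₙ} ∘ ⋯ ∘ δ_{a₁} ∘ i`. -/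
def value (Au : Automaton A X Y) (w : List A) : X ⟶ Y :=
  Au.init ≫ Au.runFrom w ≫ Au.out

end Automaton

/-!
Coherence makes the hypothesis automaton `H` track the biautomaton: reading `q ∈ Q` from
`i_ε` lands on `i_q` (each step `ē⁻¹ ∘ δ_a ∘ i_q = i_{q++[a]}`), and reading `t ∈ T` before
the output `o_ε ∘ ē` gives `o_t ∘ ē` (each step `o_t ∘ ē ∘ ē⁻¹ ∘ δ_a = o_{[a]++t} ∘ ē`).
Splitting a word as `q ++ t` or `q ++ [a] ++ t`, the value of `H` becomes one of the two
composites that consistency identifies with `ℓ`.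
-/

namespace Automaton

variable {A : Type} {C : Type*} [Category C] {X Y : C} (Au : Automaton A X Y)

@[simp]
theorem runFrom_nil : Au.runFrom [] = 𝟙 Au.S := rfl

@[simp]
theorem runFrom_singleton (a : A) : Au.runFrom [a] = Au.δ a := Category.comp_id _

theorem runFrom_append (u v : List A) :
    Au.runFrom (u ++ v) = Au.runFrom u ≫ Au.runFrom v := by
  induction u with
  | nil => simp
  | cons a u ih => simp [runFrom, ih]

theorem value_append (u v : List A) :
    Au.value (u ++ v) = (Au.init ≫ Au.runFrom u) ≫ Au.runFrom v ≫ Au.out := by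
  simp [value, runFrom_append]

end Automaton

namespace Biauto

variable {A : Type} {C : Type*} [Category C] {X Y : C} {Q T : Set (List A)}
  (B : Biauto A X Y Q T) (hεQ : [] ∈ Q) (hεT : [] ∈ T) [IsIso B.eb]

noncomputable def hypothesis : Automaton A X Y :=
  Automaton.mk B.B1 (B.i [] hεQ) (fun a => B.δ a ≫ inv B.eb) (B.eb ≫ B.o [] hεT)

variable {B}

theorem init_runFrom_hypothesis (hcoh : B.Coherent)
    (hQpre : ∀ u v : List A, u ++ v ∈ Q → u ∈ Q) (q : List A) (hq : q ∈ Q) :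
    (B.hypothesis hεQ hεT).init ≫ (B.hypothesis hεQ hεT).runFrom q = B.i q hq := by
  induction q using List.reverseRecOn with
  | nil => simp [hypothesis]
  | append_singleton q a ih =>
    have hq' : q ∈ Q := hQpre q [a] hq
    rw [Automaton.runFrom_append, Automaton.runFrom_singleton, reassoc_of% (ih hq')]
    simp [hypothesis, reassoc_of% (hcoh.1 q hq' a hq)]

theorem runFrom_out_hypothesis (hcoh : B.Coherent)
    (hTsuf : ∀ u v : List A, u ++ v ∈ T → v ∈ T) (t : List A) (ht : t ∈ T) :
    (B.hypothesis hεQ hεT).runFrom t ≫ (B.hypothesis hεQ hεT).out = B.eb ≫ B.o t ht := by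
  induction t with
  | nil => simp [hypothesis]
  | cons a t ih =>
    have ht' : t ∈ T := hTsuf [a] t ht
    simp only [Automaton.runFrom, Category.assoc, ih ht']
    simpa [hypothesis] using hcoh.2 t ht' a ht

variable {ℓ : List A → (X ⟶ Y)} (hcoh : B.Coherent) (hcons : B.Consistent ℓ)
  (hQpre : ∀ u v : List A, u ++ v ∈ Q → u ∈ Q) (hTsuf : ∀ u v : List A, u ++ v ∈ T → v ∈ T)
include hcoh hcons hQpre hTsuf

theorem hypothesis_value_append (q : List A) (hq : q ∈ Q) (t : List A) (ht : t ∈ T) :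
    (B.hypothesis hεQ hεT).value (q ++ t) = ℓ (q ++ t) := by
  rw [Automaton.value_append, init_runFrom_hypothesis hεQ hεT hcoh hQpre q hq,
    runFrom_out_hypothesis hεQ hεT hcoh hTsuf t ht]
  exact hcons.2 q hq t ht

theorem hypothesis_value_append_singleton_append (q : List A) (hq : q ∈ Q) (a : A)
    (t : List A) (ht : t ∈ T) :
    (B.hypothesis hεQ hεT).value (q ++ [a] ++ t) = ℓ (q ++ [a] ++ t) := by
  rw [List.append_assoc, Automaton.value_append, Automaton.runFrom_append,
    init_runFrom_hypothesis hεQ hεT hcoh hQpre q hq, Category.assoc,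
    runFrom_out_hypothesis hεQ hεT hcoh hTsuf t ht, ← List.append_assoc, ← hcons.1 q hq a t ht]
  simp [hypothesis]

end Biauto

theorem stmt12_general {A : Type} {C : Type*} [Category C] {X Y : C}
    (ℓ : List A → (X ⟶ Y)) (Q T : Set (List A))
    (hQpre : ∀ u v : List A, u ++ v ∈ Q → u ∈ Q)
    (hTsuf : ∀ u v : List A, u ++ v ∈ T → v ∈ T)
    (hεQ : [] ∈ Q) (hεT : [] ∈ T)
    (B : Biauto A X Y Q T) (hcoh : B.Coherent) (hcons : B.Consistent ℓ)
    [IsIso B.eb] :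
    let H : Automaton A X Y :=
      Automaton.mk B.B1 (B.i [] hεQ) (fun a => B.δ a ≫ inv B.eb) (B.eb ≫ B.o [] hεT)
    (∀ (q : List A) (hq : q ∈ Q) (t : List A) (ht : t ∈ T),
      H.value (q ++ t) = ℓ (q ++ t)) ∧
    (∀ (q : List A) (hq : q ∈ Q) (a : A) (t : List A) (ht : t ∈ T),
      H.value (q ++ [a] ++ t) = ℓ (q ++ [a] ++ t)) :=
  ⟨Biauto.hypothesis_value_append hεQ hεT hcoh hcons hQpre hTsuf,
    Biauto.hypothesis_value_append_singleton_append hεQ hεT hcoh hcons hQpre hTsuf⟩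

/-- if `ē` is an isomorphism in a coherent (Q,T)-biautomaton consistent
with `ℓ`, then the associated hypothesis automaton agrees with `ℓ` on all words of the
form `q ++ t` and `q ++ [a] ++ t` with `q ∈ Q`, `a ∈ A`, `t ∈ T`. -/
theorem stmt12 {A : Type} [Fintype A] {C : Type*} [Category C] {X Y : C}
    (ℓ : List A → (X ⟶ Y)) (Q T : Set (List A))
    (hQpre : ∀ u v : List A, u ++ v ∈ Q → u ∈ Q)
    (hTsuf : ∀ u v : List A, u ++ v ∈ T → v ∈ T)
    (hεQ : [] ∈ Q) (hεT : [] ∈ T)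
    (B : Biauto A X Y Q T) (hcoh : B.Coherent) (hcons : B.Consistent ℓ)
    [IsIso B.eb] :
    let H : Automaton A X Y :=
      Automaton.mk B.B1 (B.i [] hεQ) (fun a => B.δ a ≫ inv B.eb) (B.eb ≫ B.o [] hεT)
    (∀ (q : List A) (hq : q ∈ Q) (t : List A) (ht : t ∈ T),
      H.value (q ++ t) = ℓ (q ++ t)) ∧
    (∀ (q : List A) (hq : q ∈ Q) (a : A) (t : List A) (ht : t ∈ T),
      H.value (q ++ [a] ++ t) = ℓ (q ++ [a] ++ t)) :=
  stmt12_general ℓ Q T hQpre hTsuf hεQ hεT B hcoh hcons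
end

section
/- In the setting of the chosen (E,M)-factorizations N_{Q,T} of the canonical morphisms c_{Q,T}, for all Q ⊆ Q' and T ⊆ T': if the canonical morphism u_{Q⊆Q',T'} : N_{Q,T'} → N_{Q',T'} is an isomorphism, then so is u_{Q⊆Q',T} : N_{Q,T} → N_{Q',T}; dually, if the canonical morphism v_{Q',T⊆T'} : N_{Q',T'} → N_{Q',T} is an isomorphism, then so is v_{Q,T⊆T'} : N_{Q,T'} → N_{Q,T}. -/
open CategoryTheory

/-- The setting of the chosen `(E,M)`-factorizations `N Q T` of the canonical morphisms
`c_{Q,T} : ∐_Q X ⟶ ∏_T Y` induced by the language `ℓ`: for every `Q` there is a copower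
`P Q` of `X` over `Q` (with injections `ι`), for every `T` a power `R T` of `Y` over `T`
(with projections `π`), and for all `Q, T` a chosen factorization
`e Q T : P Q ⟶ N Q T` in `E`, `m Q T : N Q T ⟶ R T` in `M` of `c_{Q,T}`. -/
structure Setup (A : Type) {C : Type*} [Category C] (E M : MorphismProperty C)
    (X Y : C) (ℓ : List A → (X ⟶ Y)) where
  P : Set (List A) → C
  ι : ∀ (Q : Set (List A)) (q : List A), q ∈ Q → (X ⟶ P Q)
  hP : ∀ (Q : Set (List A)) (Z : C) (f : ∀ q : List A, q ∈ Q → (X ⟶ Z)),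
    ∃! g : P Q ⟶ Z, ∀ (q : List A) (hq : q ∈ Q), ι Q q hq ≫ g = f q hq
  R : Set (List A) → C
  π : ∀ (T : Set (List A)) (t : List A), t ∈ T → (R T ⟶ Y)
  hR : ∀ (T : Set (List A)) (Z : C) (f : ∀ t : List A, t ∈ T → (Z ⟶ Y)),
    ∃! g : Z ⟶ R T, ∀ (t : List A) (ht : t ∈ T), g ≫ π T t ht = f t ht
  N : Set (List A) → Set (List A) → C
  e : ∀ Q T : Set (List A), P Q ⟶ N Q T
  m : ∀ Q T : Set (List A), N Q T ⟶ R T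
  he : ∀ Q T : Set (List A), E (e Q T)
  hm : ∀ Q T : Set (List A), M (m Q T)
  hfact : ∀ (Q T : Set (List A)) (q : List A) (hq : q ∈ Q) (t : List A) (ht : t ∈ T),
    ι Q q hq ≫ e Q T ≫ m Q T ≫ π T t ht = ℓ (q ++ t)

namespace Setup

variable {A : Type} {C : Type*} [Category C] {E M : MorphismProperty C}
  {X Y : C} {ℓ : List A → (X ⟶ Y)}

/-- `u` is the canonical morphism `u_{Q⊆Q',T} : N Q T ⟶ N Q' T`:
it satisfies `u ∘ e_{Q,T} = e_{Q',T} ∘ (canonical inclusion)` and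
`m_{Q',T} ∘ u = m_{Q,T}`. -/
def IsU (S : Setup A E M X Y ℓ) {Q Q' : Set (List A)} (T : Set (List A))
    (h : Q ⊆ Q') (u : S.N Q T ⟶ S.N Q' T) : Prop :=
  (∀ (q : List A) (hq : q ∈ Q),
    S.ι Q q hq ≫ S.e Q T ≫ u = S.ι Q' q (h hq) ≫ S.e Q' T) ∧
  u ≫ S.m Q' T = S.m Q T

/-- `v` is the canonical morphism `v_{Q,T⊆T'} : N Q T' ⟶ N Q T`:
it satisfies `v ∘ e_{Q,T'} = e_{Q,T}` and
`m_{Q,T} ∘ v = (canonical restriction) ∘ m_{Q,T'}`. -/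
def IsV (S : Setup A E M X Y ℓ) {T T' : Set (List A)} (Q : Set (List A))
    (h : T ⊆ T') (v : S.N Q T' ⟶ S.N Q T) : Prop :=
  (S.e Q T' ≫ v = S.e Q T) ∧
  (∀ (t : List A) (ht : t ∈ T),
    v ≫ S.m Q T ≫ S.π T t ht = S.m Q T' ≫ S.π T' t (h ht))

end Setup

/-! The four canonical morphisms `v : N Q T' ⟶ N Q T`, `u : N Q T ⟶ N Q' T`,
`u' : N Q T' ⟶ N Q' T'` and `v' : N Q' T' ⟶ N Q' T` form a commutative square
`v ≫ u = u' ≫ v'`, since both sides are diagonals of the same lifting problem. Every `u` lies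
in `M` and every `v` in `E`, by the cancellation properties of a factorization system. If `u'`
is an isomorphism, then `v ≫ u = u' ≫ v'` lies in `E`, hence so does `u`, and a morphism in
`E ∩ M` is an isomorphism. The case of `v'` is dual. -/

namespace FactSys

variable {C : Type*} [Category C] {E M : MorphismProperty C}

lemma diag_ext (fs : FactSys E M) {X Y Z W : C} {e : X ⟶ Y} {m : Z ⟶ W} (he : E e) (hm : M m)
    {d₁ d₂ : Y ⟶ Z} (h_e : e ≫ d₁ = e ≫ d₂) (h_m : d₁ ≫ m = d₂ ≫ m) : d₁ = d₂ := by
  obtain ⟨d, -, hd⟩ := fs.diag e m (e ≫ d₂) (d₂ ≫ m) he hm (by simp)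
  rw [hd d₁ ⟨h_e, h_m⟩, hd d₂ ⟨rfl, rfl⟩]

lemma isIso_of_E_of_M (fs : FactSys E M) {X Y : C} {f : X ⟶ Y} (hE : E f) (hM : M f) :
    IsIso f := by
  obtain ⟨d, ⟨hfd, hdf⟩, -⟩ := fs.diag f f (𝟙 _) (𝟙 _) hE hM (by simp)
  exact ⟨d, hfd, hdf⟩

lemma E_of_precomp (fs : FactSys E M) {X Y Z : C} (f : X ⟶ Y) (g : Y ⟶ Z)
    (hf : E f) (hfg : E (f ≫ g)) : E g := by
  obtain ⟨W, e, m, he, hm, rfl⟩ := fs.fact g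
  -- lifting `f ≫ e ≫ m` against `m` gives a section `d` of `m`, a retraction by uniqueness of diagonals
  obtain ⟨d, ⟨hd_e, hd_m⟩, -⟩ := fs.diag (f ≫ e ≫ m) m (f ≫ e) (𝟙 _) hfg hm (by simp)
  have hmd : m ≫ d = 𝟙 _ :=
    fs.diag_ext (fs.E_comp f e hf he) hm (by simpa using hd_e) (by simp [hd_m])
  exact fs.E_comp e m he (fs.E_iso m ⟨d, hmd, hd_m⟩)

lemma M_of_postcomp (fs : FactSys E M) {X Y Z : C} (f : X ⟶ Y) (g : Y ⟶ Z)
    (hg : M g) (hfg : M (f ≫ g)) : M f := by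
  obtain ⟨W, e, m, he, hm, rfl⟩ := fs.fact f
  obtain ⟨d, ⟨hd_e, hd_m⟩, -⟩ := fs.diag e ((e ≫ m) ≫ g) (𝟙 _) (m ≫ g) he hfg (by simp)
  have hde : d ≫ e = 𝟙 _ :=
    fs.diag_ext he (fs.M_comp m g hm hg) (by simp [reassoc_of% hd_e]) (by simpa using hd_m)
  exact fs.M_comp e m (fs.M_iso e ⟨d, hd_e, hde⟩) hm

end FactSys

namespace Setup

variable {A : Type} {C : Type*} [Category C] {E M : MorphismProperty C}
  {X Y : C} {ℓ : List A → (X ⟶ Y)} (S : Setup A E M X Y ℓ)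

lemma P_hom_ext {Q : Set (List A)} {Z : C} {f g : S.P Q ⟶ Z}
    (h : ∀ (q : List A) (hq : q ∈ Q), S.ι Q q hq ≫ f = S.ι Q q hq ≫ g) : f = g := by
  obtain ⟨w, -, hw⟩ := S.hP Q Z (fun q hq => S.ι Q q hq ≫ g)
  rw [hw f h, hw g fun _ _ => rfl]

lemma R_hom_ext {T : Set (List A)} {Z : C} {f g : Z ⟶ S.R T}
    (h : ∀ (t : List A) (ht : t ∈ T), f ≫ S.π T t ht = g ≫ S.π T t ht) : f = g := by
  obtain ⟨w, -, hw⟩ := S.hR T Z (fun t ht => g ≫ S.π T t ht)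
  rw [hw f h, hw g fun _ _ => rfl]

lemma exists_isU (fs : FactSys E M) {Q Q' : Set (List A)} (T : Set (List A)) (hQ : Q ⊆ Q') :
    ∃ u : S.N Q T ⟶ S.N Q' T, S.IsU T hQ u := by
  obtain ⟨incl, hincl, -⟩ := S.hP Q (S.P Q') (fun q hq => S.ι Q' q (hQ hq))
  have hsq : S.e Q T ≫ S.m Q T = (incl ≫ S.e Q' T) ≫ S.m Q' T :=
    S.P_hom_ext fun q hq => S.R_hom_ext fun t ht => by
      simp only [Category.assoc]
      rw [S.hfact, reassoc_of% (hincl q hq), S.hfact]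
  obtain ⟨u, ⟨hu_e, hu_m⟩, -⟩ := fs.diag (S.e Q T) (S.m Q' T) (incl ≫ S.e Q' T)
    (S.m Q T) (S.he Q T) (S.hm Q' T) hsq
  exact ⟨u, fun q hq => by rw [hu_e, reassoc_of% (hincl q hq)], hu_m⟩

lemma exists_isV (fs : FactSys E M) (Q : Set (List A)) {T T' : Set (List A)} (hT : T ⊆ T') :
    ∃ v : S.N Q T' ⟶ S.N Q T, S.IsV Q hT v := by
  obtain ⟨res, hres, -⟩ := S.hR T (S.R T') (fun t ht => S.π T' t (hT ht))
  have hsq : S.e Q T' ≫ S.m Q T' ≫ res = S.e Q T ≫ S.m Q T :=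
    S.P_hom_ext fun q hq => S.R_hom_ext fun t ht => by
      simp only [Category.assoc]
      rw [hres, S.hfact, S.hfact]
  obtain ⟨v, ⟨hv_e, hv_m⟩, -⟩ := fs.diag (S.e Q T') (S.m Q T) (S.e Q T)
    (S.m Q T' ≫ res) (S.he Q T') (S.hm Q T) hsq
  exact ⟨v, hv_e, fun t ht => by rw [reassoc_of% hv_m, hres]⟩

variable {S}

lemma IsU.M_mem (fs : FactSys E M) {Q Q' T : Set (List A)} {hQ : Q ⊆ Q'}
    {u : S.N Q T ⟶ S.N Q' T} (hu : S.IsU T hQ u) : M u :=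
  fs.M_of_postcomp u (S.m Q' T) (S.hm Q' T) (hu.2 ▸ S.hm Q T)

lemma IsV.E_mem (fs : FactSys E M) {Q T T' : Set (List A)} {hT : T ⊆ T'}
    {v : S.N Q T' ⟶ S.N Q T} (hv : S.IsV Q hT v) : E v :=
  fs.E_of_precomp (S.e Q T') v (S.he Q T') (hv.1 ▸ S.he Q T)

lemma v_comp_u_eq_u_comp_v (fs : FactSys E M) {Q Q' T T' : Set (List A)}
    {hQ : Q ⊆ Q'} {hT : T ⊆ T'}
    {v : S.N Q T' ⟶ S.N Q T} {u : S.N Q T ⟶ S.N Q' T}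
    {u' : S.N Q T' ⟶ S.N Q' T'} {v' : S.N Q' T' ⟶ S.N Q' T}
    (hv : S.IsV Q hT v) (hu : S.IsU T hQ u) (hu' : S.IsU T' hQ u') (hv' : S.IsV Q' hT v') :
    v ≫ u = u' ≫ v' := by
  refine fs.diag_ext (S.he Q T') (S.hm Q' T) (S.P_hom_ext fun q hq => ?_)
    (S.R_hom_ext fun t ht => ?_)
  · rw [reassoc_of% hv.1, hu.1 q hq, reassoc_of% (hu'.1 q hq), hv'.1]
  · simp only [Category.assoc]
    rw [reassoc_of% hu.2, hv.2, hv'.2, reassoc_of% hu'.2]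

end Setup

theorem stmt15_general {A : Type} {C : Type*} [Category C]
    (E M : MorphismProperty C) (fs : FactSys E M) {X Y : C}
    (ℓ : List A → (X ⟶ Y)) (S : Setup A E M X Y ℓ)
    (Q Q' T T' : Set (List A)) (hQ : Q ⊆ Q') (hT : T ⊆ T') :
    (∀ u' : S.N Q T' ⟶ S.N Q' T', S.IsU T' hQ u' → IsIso u' →
      ∀ u : S.N Q T ⟶ S.N Q' T, S.IsU T hQ u → IsIso u) ∧
    (∀ v' : S.N Q' T' ⟶ S.N Q' T, S.IsV Q' hT v' → IsIso v' →
      ∀ v : S.N Q T' ⟶ S.N Q T, S.IsV Q hT v → IsIso v) := by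
  constructor
  · intro u' hu' hu'_iso u hu
    obtain ⟨v, hv⟩ := S.exists_isV fs Q hT
    obtain ⟨v', hv'⟩ := S.exists_isV fs Q' hT
    have h_comp : E (v ≫ u) := by
      rw [Setup.v_comp_u_eq_u_comp_v fs hv hu hu' hv']
      exact fs.E_comp u' v' (fs.E_iso u' hu'_iso) (hv'.E_mem fs)
    exact fs.isIso_of_E_of_M (fs.E_of_precomp v u (hv.E_mem fs) h_comp) (hu.M_mem fs)
  · intro v' hv' hv'_iso v hv
    obtain ⟨u, hu⟩ := S.exists_isU fs T hQ
    obtain ⟨u', hu'⟩ := S.exists_isU fs T' hQ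
    have h_comp : M (v ≫ u) := by
      rw [Setup.v_comp_u_eq_u_comp_v fs hv hu hu' hv']
      exact fs.M_comp u' v' (hu'.M_mem fs) (fs.M_iso v' hv'_iso)
    exact fs.isIso_of_E_of_M (hv.E_mem fs) (fs.M_of_postcomp v u (hu.M_mem fs) h_comp)

/-- if `u_{Q⊆Q',T'}` is an isomorphism then so is `u_{Q⊆Q',T}`, and
dually if `v_{Q',T⊆T'}` is an isomorphism then so is `v_{Q,T⊆T'}`. -/
theorem stmt15 {A : Type} [Fintype A] {C : Type*} [Category C]
    (E M : MorphismProperty C) (fs : FactSys E M) {X Y : C}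
    (ℓ : List A → (X ⟶ Y)) (S : Setup A E M X Y ℓ)
    (Q Q' T T' : Set (List A)) (hQ : Q ⊆ Q') (hT : T ⊆ T') :
    (∀ u' : S.N Q T' ⟶ S.N Q' T', S.IsU T' hQ u' → IsIso u' →
      ∀ u : S.N Q T ⟶ S.N Q' T, S.IsU T hQ u → IsIso u) ∧
    (∀ v' : S.N Q' T' ⟶ S.N Q' T, S.IsV Q' hT v' → IsIso v' →
      ∀ v : S.N Q T' ⟶ S.N Q T, S.IsV Q hT v → IsIso v) :=
  stmt15_general E M fs ℓ S Q Q' T T' hQ hT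
end
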